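/- arXiv:1909.06622 — 5 statements merged into one kernel-verified Lean document; each statement's English description precedes it below -/
import Mathlib

section
/- Let c₁, c₂, c₃, c₄ ∈ (-1, 1]. Then there exists a unique (q₁, q₂, q₃, q₄, t) with each qᵢ > 0, t ≥ 0, q₁q₂q₃q₄ = 1, t ≥ (qᵢ - qᵢ⁻¹)/2 for all i, and (qᵢ - t)/√(1+t²) = cᵢ for all i. -/
lemma phi_lt {c a b : ℝ} (hc1 : -1 ≤ c) (ha : 0 ≤ a) (hab : a < b) :
    a + c * Real.sqrt (1 + a ^ 2) < b + c * Real.sqrt (1 + b ^ 2) := by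
  set u := Real.sqrt (1 + a ^ 2) with hud
  set v := Real.sqrt (1 + b ^ 2) with hvd
  have hu0 : 0 ≤ u := Real.sqrt_nonneg _
  have hv0 : 0 ≤ v := Real.sqrt_nonneg _
  have hu : u ^ 2 = 1 + a ^ 2 := Real.sq_sqrt (by positivity)
  have hv : v ^ 2 = 1 + b ^ 2 := Real.sq_sqrt (by positivity)
  have hua : a < u := by nlinarith
  have hvb : b < v := by nlinarith
  have huv : u ≤ v := by
    rw [hud, hvd]; exact Real.sqrt_le_sqrt (by nlinarith)
  have key : v - u < b - a := by
    nlinarith [mul_pos (sub_pos.2 hab) (show (0:ℝ) < u + v by nlinarith)]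
  nlinarith [mul_le_mul_of_nonneg_right (neg_le_iff_add_nonneg.mp hc1 : (0:ℝ) ≤ c + 1)
    (sub_nonneg.2 huv)]

theorem stmt_4 (c : Fin 4 → ℝ) (hc : ∀ i, -1 < c i ∧ c i ≤ 1) :
    ∃! p : (Fin 4 → ℝ) × ℝ,
      (∀ i, 0 < p.1 i) ∧ 0 ≤ p.2 ∧ (∏ i, p.1 i) = 1 ∧
      (∀ i, (p.1 i - (p.1 i)⁻¹) / 2 ≤ p.2) ∧
      (∀ i, (p.1 i - p.2) / Real.sqrt (1 + p.2 ^ 2) = c i) := by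
  have hsq : ∀ t : ℝ, 0 < Real.sqrt (1 + t ^ 2) := fun t => Real.sqrt_pos.2 (by positivity)
  have hsq2 : ∀ t : ℝ, (Real.sqrt (1 + t ^ 2)) ^ 2 = 1 + t ^ 2 :=
    fun t => Real.sq_sqrt (by positivity)
  set φ : Fin 4 → ℝ → ℝ := fun i t => t + c i * Real.sqrt (1 + t ^ 2) with hφ
  set G : ℝ → ℝ := fun t => ∏ i, max (φ i t) 0 with hG
  have hGcont : Continuous G := by
    apply continuous_finset_prod
    intro i _
    exact (continuous_id.add (continuous_const.mul
      ((continuous_const.add (continuous_pow 2)).sqrt))).max continuous_const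
  set T : ℝ := 1 + ∑ i, (1 - c i) / (1 + c i) with hT
  have hci : ∀ i, 0 ≤ (1 - c i) / (1 + c i) :=
    fun i => div_nonneg (by linarith [(hc i).2]) (by linarith [(hc i).1])
  have hT1 : 1 ≤ T := le_add_of_nonneg_right (Finset.sum_nonneg fun i _ => hci i)
  have hT0 : (0:ℝ) ≤ T := by linarith
  have hTi : ∀ i, (1 - c i) / (1 + c i) ≤ T := by
    intro i
    have := Finset.single_le_sum (f := fun i => (1 - c i) / (1 + c i))
      (fun i _ => hci i) (Finset.mem_univ i)
    linarith
  have hφT : ∀ i, 1 ≤ φ i T := by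
    intro i
    have hle : Real.sqrt (1 + T ^ 2) ≤ T + 1 := by
      rw [show T + 1 = Real.sqrt ((T + 1) ^ 2) from (Real.sqrt_sq (by linarith)).symm]
      exact Real.sqrt_le_sqrt (by nlinarith)
    rcases le_or_gt 0 (c i) with h | h
    · have h2 : (0:ℝ) ≤ c i * Real.sqrt (1 + T ^ 2) := mul_nonneg h (Real.sqrt_nonneg _)
      simp only [hφ]; linarith
    · have h1 : c i * (T + 1) ≤ c i * Real.sqrt (1 + T ^ 2) :=
        mul_le_mul_of_nonpos_left hle h.le
      have h2 : 1 - c i ≤ (1 + c i) * T := by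
        have h3 := hTi i
        rw [div_le_iff₀ (show (0:ℝ) < 1 + c i by linarith [(hc i).1])] at h3
        linarith
      simp only [hφ]; nlinarith
  have hGT : 1 ≤ G T := by
    simp only [hG]
    calc (1:ℝ) = ∏ _i : Fin 4, 1 := by simp
      _ ≤ ∏ i, max (φ i T) 0 :=
        Finset.prod_le_prod (fun i _ => zero_le_one) fun i _ => le_max_of_le_left (hφT i)
  have hG0 : G 0 ≤ 1 := by
    simp only [hG]
    refine Finset.prod_le_one (f := fun i => max (φ i 0) 0) (fun i _ => le_max_right _ _)
      fun i _ => ?_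
    show max (φ i 0) 0 ≤ 1
    have h0 : φ i 0 = c i := by simp [hφ]
    rw [h0]
    exact max_le (hc i).2 zero_le_one
  obtain ⟨t₀, ht₀mem, ht₀⟩ := intermediate_value_Icc hT0 hGcont.continuousOn ⟨hG0, hGT⟩
  have ht₀0 : 0 ≤ t₀ := ht₀mem.1
  have hpos : ∀ i, 0 < φ i t₀ := by
    intro i
    rcases lt_or_ge 0 (φ i t₀) with h | h
    · exact h
    · exfalso
      have hz : max (φ i t₀) 0 = 0 := max_eq_right h
      have : G t₀ = 0 := Finset.prod_eq_zero (Finset.mem_univ i) hz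
      rw [ht₀] at this; norm_num at this
  have hF : ∏ i, φ i t₀ = 1 := by
    rw [← ht₀]
    exact Finset.prod_congr rfl fun i _ => (max_eq_left (hpos i).le).symm
  -- the unique t with all factors positive and product 1
  have tuniq : ∀ t' : ℝ, 0 ≤ t' → (∀ i, 0 < φ i t') → (∏ i, φ i t') = 1 → t' = t₀ := by
    intro t' ht' hpos' hF'
    rcases lt_trichotomy t' t₀ with h | h | h
    · exfalso
      have := Finset.prod_lt_prod_of_nonempty (fun i _ => hpos' i)
        (fun i _ => phi_lt (hc i).1.le ht' h) Finset.univ_nonempty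
      rw [hF, hF'] at this; exact lt_irrefl _ this
    · exact h
    · exfalso
      have := Finset.prod_lt_prod_of_nonempty (fun i _ => hpos i)
        (fun i _ => phi_lt (hc i).1.le ht₀0 h) Finset.univ_nonempty
      rw [hF, hF'] at this; exact lt_irrefl _ this
  refine ⟨⟨fun i => φ i t₀, t₀⟩, ⟨hpos, ht₀0, hF, ?_, ?_⟩, ?_⟩
  · intro i
    dsimp only
    have hq := hpos i
    have hinv : φ i t₀ * (φ i t₀)⁻¹ = 1 := mul_inv_cancel₀ hq.ne'
    have hc2 : (0:ℝ) ≤ 1 - c i ^ 2 := by nlinarith [(hc i).1, (hc i).2]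
    have hkey : (φ i t₀) ^ 2 - 2 * t₀ * φ i t₀ - 1 ≤ 0 := by
      simp only [hφ]
      nlinarith [hsq2 t₀, mul_nonneg hc2 (sq_nonneg (Real.sqrt (1 + t₀ ^ 2)))]
    rw [div_le_iff₀ (by norm_num : (0:ℝ) < 2)]
    have h7 : φ i t₀ - t₀ * 2 ≤ (φ i t₀)⁻¹ := by
      rw [inv_eq_one_div, le_div_iff₀ hq]
      nlinarith [hkey]
    linarith
  · intro i
    dsimp only
    rw [div_eq_iff (hsq t₀).ne']
    simp only [hφ]; ring
  · rintro ⟨q', t'⟩ ⟨h1, h2, h3, h4, h5⟩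
    have hq' : ∀ i, q' i = φ i t' := by
      intro i
      have h6 := h5 i
      rw [div_eq_iff (hsq t').ne'] at h6
      simp only [hφ]; linarith
    have ht' : t' = t₀ := by
      apply tuniq t' h2
      · intro i; rw [← hq' i]; exact h1 i
      · rw [← h3]; exact Finset.prod_congr rfl fun i _ => (hq' i).symm
    subst ht'
    exact Prod.ext (funext fun i => hq' i) rfl
end

section
/- Let c₁, c₂ ∈ (-1, 1) with c₁ + c₂ ≤ 0, and let t ≥ 0. Then (c₁c₂ + 1)·t > -(c₁+c₂)·√(1+t²) if and only if t > -(c₁+c₂)/√((1-c₁²)(1-c₂²)). -/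
theorem stmt_6 (c₁ c₂ : ℝ) (h₁ : c₁ ∈ Set.Ioo (-1 : ℝ) 1) (h₂ : c₂ ∈ Set.Ioo (-1 : ℝ) 1)
    (hsum : c₁ + c₂ ≤ 0) (t : ℝ) (ht : 0 ≤ t) :
    (c₁ * c₂ + 1) * t > -(c₁ + c₂) * Real.sqrt (1 + t ^ 2) ↔
      t > -(c₁ + c₂) / Real.sqrt ((1 - c₁ ^ 2) * (1 - c₂ ^ 2)) := by
  obtain ⟨ha1, ha2⟩ := h₁
  obtain ⟨hb1, hb2⟩ := h₂
  have hs : 0 ≤ -(c₁ + c₂) := by linarith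
  have hA : 0 < c₁ * c₂ + 1 := by nlinarith
  have hD : 0 < (1 - c₁ ^ 2) * (1 - c₂ ^ 2) := mul_pos (by nlinarith) (by nlinarith)
  set u := Real.sqrt (1 + t ^ 2) with hu
  set v := Real.sqrt ((1 - c₁ ^ 2) * (1 - c₂ ^ 2)) with hv
  have hu2 : u ^ 2 = 1 + t ^ 2 := Real.sq_sqrt (by positivity)
  have hupos : 0 < u := Real.sqrt_pos.mpr (by positivity)
  have hv2 : v ^ 2 = (1 - c₁ ^ 2) * (1 - c₂ ^ 2) := Real.sq_sqrt hD.le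
  have hvpos : 0 < v := Real.sqrt_pos.mpr hD
  have key : (c₁ * c₂ + 1) ^ 2 = (-(c₁ + c₂)) ^ 2 + v ^ 2 := by rw [hv2]; ring
  rw [gt_iff_lt, gt_iff_lt, div_lt_iff₀ hvpos]
  constructor
  · intro h
    -- from h : -(c₁+c₂) * u < (c₁*c₂+1) * t, both sides nonneg comparisons
    have hAt : 0 < (c₁ * c₂ + 1) * t := lt_of_le_of_lt (by positivity) h
    nlinarith [mul_pos (lt_of_le_of_lt (by positivity : (0:ℝ) ≤ -(c₁+c₂)*u) h)
        (by nlinarith : 0 < (c₁ * c₂ + 1) * t + -(c₁ + c₂) * u),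
      mul_pos hupos hvpos, mul_nonneg ht hvpos.le, mul_nonneg hs hupos.le,
      sq_nonneg (t * v - -(c₁ + c₂)), sq_nonneg (t * v + -(c₁ + c₂))]
  · intro h
    have htv : 0 < t * v := lt_of_le_of_lt hs h
    have ht' : 0 < t := by
      by_contra hc
      nlinarith

    nlinarith [mul_pos (sub_pos.mpr h) (by linarith : 0 < t * v + -(c₁ + c₂)),
      mul_pos hA ht', mul_nonneg hs hupos.le, mul_pos (mul_pos hA ht') hupos]
end

section
/- Let c₁, c₂ ∈ (-1, 1) with c₁ + c₂ ≤ 0, and let t ≥ 0. Then (c₁c₂+1)·t > -(c₁+c₂)·√(1+t²) if and only if √(1+t²) > (c₁c₂+1)/√((1-c₁²)(1-c₂²)). -/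
theorem stmt_7 (c₁ c₂ : ℝ) (h₁ : c₁ ∈ Set.Ioo (-1 : ℝ) 1) (h₂ : c₂ ∈ Set.Ioo (-1 : ℝ) 1)
    (hsum : c₁ + c₂ ≤ 0) (t : ℝ) (ht : 0 ≤ t) :
    (c₁ * c₂ + 1) * t > -(c₁ + c₂) * Real.sqrt (1 + t ^ 2) ↔
      Real.sqrt (1 + t ^ 2) > (c₁ * c₂ + 1) / Real.sqrt ((1 - c₁ ^ 2) * (1 - c₂ ^ 2)) := by
  obtain ⟨h1l, h1r⟩ := h₁
  obtain ⟨h2l, h2r⟩ := h₂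
  set a := c₁ * c₂ + 1 with ha_def
  set b := -(c₁ + c₂) with hb_def
  set D := (1 - c₁ ^ 2) * (1 - c₂ ^ 2) with hD_def
  have hD : 0 < D := mul_pos (by nlinarith) (by nlinarith)
  have hid : a ^ 2 - b ^ 2 = D := by ring
  have ha : 0 < a := by nlinarith
  have hb : 0 ≤ b := by linarith
  have hs2 : Real.sqrt (1 + t ^ 2) ^ 2 = 1 + t ^ 2 := Real.sq_sqrt (by positivity)
  have hs0 : 0 ≤ Real.sqrt (1 + t ^ 2) := Real.sqrt_nonneg _
  set s := Real.sqrt (1 + t ^ 2) with hs_def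
  have hsqD : 0 < Real.sqrt D := Real.sqrt_pos.mpr hD
  constructor
  · intro h
    -- from a*t > b*s deduce D*(1+t²) > a²
    have hsq : (b * s) ^ 2 < (a * t) ^ 2 := by
      have hbs : 0 ≤ b * s := mul_nonneg hb hs0
      nlinarith
    have hkey : a ^ 2 < D * (1 + t ^ 2) := by nlinarith
    rw [gt_iff_lt, div_lt_iff₀ hsqD]
    nlinarith [Real.sq_sqrt hD.le, Real.sqrt_nonneg D, mul_nonneg hs0 (Real.sqrt_nonneg D),
      sq_nonneg (a - s * Real.sqrt D)]
  · intro h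
    have h' : a < s * Real.sqrt D := (div_lt_iff₀ hsqD).mp h
    have hkey : a ^ 2 < D * (1 + t ^ 2) := by
      nlinarith [Real.sq_sqrt hD.le, Real.sqrt_nonneg D]
    have hsq : (b * s) ^ 2 < (a * t) ^ 2 := by nlinarith
    have hat : 0 ≤ a * t := mul_nonneg ha.le ht
    exact lt_of_pow_lt_pow_left₀ 2 hat hsq
end

section
/- Let c₁, c₂ ∈ (-1,1) with c₁c₂ < 0. Then for all c₃, c₄ ∈ [-1,1], Φ(c₁,c₂,c₃,c₄) < 0. -/
def Phi (c₁ c₂ c₃ c₄ : ℝ) : ℝ :=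
  c₁ * c₂ * (c₁ * c₂ + 1) * c₃ * c₄ - c₁ * c₂ * (c₁ + c₂) * (c₃ + c₄)
    + (c₁ + c₂) ^ 2 - c₁ * c₂ - 1

theorem stmt_16 (c₁ c₂ : ℝ) (h₁ : c₁ ∈ Set.Ioo (-1 : ℝ) 1) (h₂ : c₂ ∈ Set.Ioo (-1 : ℝ) 1)
    (hneg : c₁ * c₂ < 0) :
    ∀ c₃ ∈ Set.Icc (-1 : ℝ) 1, ∀ c₄ ∈ Set.Icc (-1 : ℝ) 1, Phi c₁ c₂ c₃ c₄ < 0 := by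
  rintro c₃ ⟨h3l, h3r⟩ c₄ ⟨h4l, h4r⟩
  obtain ⟨a1, b1⟩ := h₁
  obtain ⟨a2, b2⟩ := h₂
  -- one of c₁, c₂ is negative, the other positive
  have hprod2 : (1 - c₁) * (1 - c₂) < 2 := by
    rcases lt_or_ge c₁ 0 with hc | hc
    · have hc2 : 0 < c₂ := by nlinarith
      nlinarith
    · have hc1 : 0 < c₁ := by
        rcases hc.lt_or_eq with h | h
        · exact h
        · exfalso; nlinarith
      have hc2 : c₂ < 0 := by nlinarith
      nlinarith
  have hprod2' : (1 + c₁) * (1 + c₂) < 2 := by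
    rcases lt_or_ge c₁ 0 with hc | hc
    · have hc2 : 0 < c₂ := by nlinarith
      nlinarith
    · have hc1 : 0 < c₁ := by
        rcases hc.lt_or_eq with h | h
        · exact h
        · exfalso; nlinarith
      have hc2 : c₂ < 0 := by nlinarith
      nlinarith
  have hp1 : 0 < (1 - c₁) * (1 - c₂) := by nlinarith
  have hp2 : 0 < (1 + c₁) * (1 + c₂) := by nlinarith
  have F11 : Phi c₁ c₂ 1 1 < 0 := by unfold Phi; nlinarith
  have Fmm : Phi c₁ c₂ (-1) (-1) < 0 := by unfold Phi; nlinarith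
  have F1m : Phi c₁ c₂ 1 (-1) < 0 := by unfold Phi; nlinarith
  have Fm1 : Phi c₁ c₂ (-1) 1 < 0 := by unfold Phi; nlinarith
  have w3p : (0:ℝ) ≤ (1 + c₃) / 2 := by linarith
  have w3m : (0:ℝ) ≤ (1 - c₃) / 2 := by linarith
  have w4p : (0:ℝ) ≤ (1 + c₄) / 2 := by linarith
  have w4m : (0:ℝ) ≤ (1 - c₄) / 2 := by linarith
  have key : Phi c₁ c₂ c₃ c₄ =
      ((1 + c₃)/2) * ((1 + c₄)/2) * Phi c₁ c₂ 1 1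
      + ((1 + c₃)/2) * ((1 - c₄)/2) * Phi c₁ c₂ 1 (-1)
      + ((1 - c₃)/2) * ((1 + c₄)/2) * Phi c₁ c₂ (-1) 1
      + ((1 - c₃)/2) * ((1 - c₄)/2) * Phi c₁ c₂ (-1) (-1) := by
    unfold Phi; ring
  rw [key]
  set M := max (max (Phi c₁ c₂ 1 1) (Phi c₁ c₂ 1 (-1))) (max (Phi c₁ c₂ (-1) 1) (Phi c₁ c₂ (-1) (-1))) with hM
  have hMneg : M < 0 := by
    simp only [hM, max_lt_iff]; exact ⟨⟨F11, F1m⟩, ⟨Fm1, Fmm⟩⟩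
  have l11 : Phi c₁ c₂ 1 1 ≤ M := le_max_of_le_left (le_max_left _ _)
  have l1m : Phi c₁ c₂ 1 (-1) ≤ M := le_max_of_le_left (le_max_right _ _)
  have lm1 : Phi c₁ c₂ (-1) 1 ≤ M := le_max_of_le_right (le_max_left _ _)
  have lmm : Phi c₁ c₂ (-1) (-1) ≤ M := le_max_of_le_right (le_max_right _ _)
  nlinarith [mul_nonneg (mul_nonneg w3p w4p) (sub_nonneg.2 l11),
    mul_nonneg (mul_nonneg w3p w4m) (sub_nonneg.2 l1m),
    mul_nonneg (mul_nonneg w3m w4p) (sub_nonneg.2 lm1),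
    mul_nonneg (mul_nonneg w3m w4m) (sub_nonneg.2 lmm), hMneg]
end

section
/- Let c₁, c₂ ∈ (1-√2, 0). Then for all c₃ ∈ [c₁, 1] and c₄ ∈ [c₂, 1], Φ(c₁,c₂,c₃,c₄) < 0. -/
set_option maxHeartbeats 1000000

theorem stmt_17 (c₁ c₂ : ℝ) (h₁ : c₁ ∈ Set.Ioo (1 - Real.sqrt 2) 0)
    (h₂ : c₂ ∈ Set.Ioo (1 - Real.sqrt 2) 0) :
    ∀ c₃ ∈ Set.Icc c₁ 1, ∀ c₄ ∈ Set.Icc c₂ 1, Phi c₁ c₂ c₃ c₄ < 0 := by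
  obtain ⟨ha1, hb1⟩ := h₁
  obtain ⟨ha2, hb2⟩ := h₂
  have hsq : Real.sqrt 2 ^ 2 = 2 := Real.sq_sqrt (by norm_num)
  have hroot : Real.sqrt 2 < 14143 / 10000 := by
    nlinarith [sq_nonneg (Real.sqrt 2 - 14143 / 10000)]
  have hr1 : (-4143 / 10000 : ℝ) < c₁ := by linarith
  have hr2 : (-4143 / 10000 : ℝ) < c₂ := by linarith
  have hs1 : (1 - c₁) ^ 2 < 2 := by
    have h : 1 - c₁ < Real.sqrt 2 := by linarith
    nlinarith [Real.sqrt_nonneg 2]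
  have hs2 : (1 - c₂) ^ 2 < 2 := by
    have h : 1 - c₂ < Real.sqrt 2 := by linarith
    nlinarith [Real.sqrt_nonneg 2]
  have hp : 0 < c₁ * c₂ := mul_pos_of_neg_of_neg hb1 hb2
  intro c₃ hc₃ c₄ hc₄
  obtain ⟨h3l, h3u⟩ := hc₃
  obtain ⟨h4l, h4u⟩ := hc₄
  -- corner values
  have t_gt : 1 < (1 - c₁) * (1 - c₂) := by nlinarith
  have t_lt : (1 - c₁) * (1 - c₂) < 2 := by
    have h4 : (1 - c₁) ^ 2 * (1 - c₂) ^ 2 < 4 := by nlinarith [sq_nonneg (1 - c₂)]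
    nlinarith [sq_nonneg ((1 - c₁) * (1 - c₂) - 2)]
  have P11 : Phi c₁ c₂ 1 1 < 0 := by
    have e : Phi c₁ c₂ 1 1
        = ((1 - c₁) * (1 - c₂)) ^ 2 - 2 * ((1 - c₁) * (1 - c₂)) := by unfold Phi; ring
    rw [e]
    nlinarith [mul_pos (by linarith : (0:ℝ) < (1 - c₁) * (1 - c₂))
      (by linarith : (0:ℝ) < 2 - (1 - c₁) * (1 - c₂))]
  have P1c : Phi c₁ c₂ 1 c₂ < 0 := by
    have e : Phi c₁ c₂ 1 c₂
        = (c₂ ^ 2 - 1) * (c₁ ^ 2 * (c₂ - 1) - c₁ * c₂ + 1) := by unfold Phi; ring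
    rw [e]
    have hg : 0 < c₁ ^ 2 * (c₂ - 1) - c₁ * c₂ + 1 := by
      nlinarith [mul_pos (by linarith : (0:ℝ) < c₁ + 4143/10000) (by linarith : (0:ℝ) < -c₁),
        mul_pos (by linarith : (0:ℝ) < c₂ + 4143/10000) (by linarith : (0:ℝ) < -c₂),
        mul_nonneg (sq_nonneg c₁) (by linarith : (0:ℝ) ≤ 1 - c₂)]
    nlinarith [hg]
  have Pc1 : Phi c₁ c₂ c₁ 1 < 0 := by
    have e : Phi c₁ c₂ c₁ 1
        = (c₁ ^ 2 - 1) * (c₂ ^ 2 * (c₁ - 1) - c₁ * c₂ + 1) := by unfold Phi; ring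
    rw [e]
    have hg : 0 < c₂ ^ 2 * (c₁ - 1) - c₁ * c₂ + 1 := by
      nlinarith [mul_pos (by linarith : (0:ℝ) < c₁ + 4143/10000) (by linarith : (0:ℝ) < -c₁),
        mul_pos (by linarith : (0:ℝ) < c₂ + 4143/10000) (by linarith : (0:ℝ) < -c₂),
        mul_nonneg (sq_nonneg c₂) (by linarith : (0:ℝ) ≤ 1 - c₁)]
    nlinarith [hg]
  have Pcc : Phi c₁ c₂ c₁ c₂ < 0 := by
    have e : Phi c₁ c₂ c₁ c₂
        = -((1 - c₁ * c₂) * ((1 - c₁) * (1 - c₂)) * ((1 + c₁) * (1 + c₂))) := by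
      unfold Phi; ring
    rw [e]
    have h1 : 0 < 1 - c₁ * c₂ := by nlinarith
    have h2 : 0 < (1 + c₁) * (1 + c₂) := by nlinarith
    nlinarith [mul_pos (mul_pos h1 (by linarith : (0:ℝ) < (1 - c₁) * (1 - c₂))) h2]
  -- reduce to corners
  rcases le_or_gt 0 (c₁ * c₂ * (c₁ * c₂ + 1) * c₃ - c₁ * c₂ * (c₁ + c₂)) with hK | hK
  · have step : Phi c₁ c₂ c₃ c₄ ≤ Phi c₁ c₂ c₃ 1 := by
      unfold Phi
      nlinarith [mul_nonneg hK (by linarith : (0:ℝ) ≤ 1 - c₄)]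
    have hK' : (0:ℝ) ≤ c₁ * c₂ * (c₁ * c₂ + 1) * 1 - c₁ * c₂ * (c₁ + c₂) := by nlinarith
    have step2 : Phi c₁ c₂ c₃ 1 ≤ Phi c₁ c₂ 1 1 := by
      unfold Phi
      nlinarith [mul_nonneg hK' (by linarith : (0:ℝ) ≤ 1 - c₃)]
    linarith
  · have step : Phi c₁ c₂ c₃ c₄ ≤ Phi c₁ c₂ c₃ c₂ := by
      unfold Phi
      nlinarith [mul_nonneg (le_of_lt (neg_pos.mpr hK)) (by linarith : (0:ℝ) ≤ c₄ - c₂)]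
    rcases le_or_gt 0 (c₁ * c₂ * (c₁ * c₂ + 1) * c₂ - c₁ * c₂ * (c₁ + c₂)) with hK2 | hK2
    · have step2 : Phi c₁ c₂ c₃ c₂ ≤ Phi c₁ c₂ 1 c₂ := by
        unfold Phi
        nlinarith [mul_nonneg hK2 (by linarith : (0:ℝ) ≤ 1 - c₃)]
      linarith
    · have step2 : Phi c₁ c₂ c₃ c₂ ≤ Phi c₁ c₂ c₁ c₂ := by
        unfold Phi
        nlinarith [mul_nonneg (le_of_lt (neg_pos.mpr hK2)) (by linarith : (0:ℝ) ≤ c₃ - c₁)]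
      linarith
end
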